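/- arXiv:1406.6348 — 2 statements merged into one kernel-verified Lean document; each statement's English description precedes it below -/
import Mathlib

section
/- Let I ⊆ ℝ be an interval with Lebesgue measure, let f₁, …, f_N : I → ℝ be probability density functions on I, and let K₁, …, K_N be nonnegative reals with Σᵢ Kᵢ > 0. Set g = Σᵢ Kᵢ √(fᵢ) and Z = ∫_I g(t)² dt. Then 0 < Z < ∞, the function f̂₀ = g² / Z is a probability density function on I, and f̂₀ minimizes the functional f ↦ Σᵢ Kᵢ ∫_I (√(fᵢ(t)) − √(f(t)))² dt over all probability density functions f on I. -/
open MeasureTheory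
open scoped BigOperators

def IsPDFOn (I : Set ℝ) (f : ℝ → ℝ) : Prop :=
  Measurable f ∧ (∀ᵐ x ∂(volume.restrict I), 0 ≤ f x) ∧ (∫ x in I, f x) = 1

lemma IsPDFOn.integrableOn {I : Set ℝ} {f : ℝ → ℝ} (h : IsPDFOn I f) :
    IntegrableOn f I := by
  by_contra hc
  exact one_ne_zero (h.2.2 ▸ integral_undef hc)

lemma IsPDFOn.sqrt_sq_ae {I : Set ℝ} {f : ℝ → ℝ} (h : IsPDFOn I f) :
    ∀ᵐ x ∂(volume.restrict I), Real.sqrt (f x) ^ 2 = f x :=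
  h.2.1.mono fun _ hx => Real.sq_sqrt hx

lemma sq_sqrt_le_abs (a : ℝ) : Real.sqrt a ^ 2 ≤ |a| := by
  rcases le_or_gt 0 a with h | h
  · rw [Real.sq_sqrt h]; exact le_abs_self a
  · rw [Real.sqrt_eq_zero'.2 h.le]; simpa using abs_nonneg a

lemma cross_integrable {I : Set ℝ} {p q : ℝ → ℝ} (hp : IsPDFOn I p) (hq : IsPDFOn I q) :
    IntegrableOn (fun x => Real.sqrt (p x) * Real.sqrt (q x)) I := by
  have hb : IntegrableOn (fun x => (|p x| + |q x|) / 2) I :=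
    ((hp.integrableOn.abs.add hq.integrableOn.abs).div_const 2)
  refine Integrable.mono' hb ?_ ?_
  · exact ((hp.1.sqrt.mul hq.1.sqrt)).aestronglyMeasurable
  · refine Filter.Eventually.of_forall fun x => ?_
    have h1 : ‖Real.sqrt (p x) * Real.sqrt (q x)‖ = Real.sqrt (p x) * Real.sqrt (q x) := by
      rw [Real.norm_eq_abs, abs_of_nonneg (by positivity)]
    rw [h1]
    nlinarith [sq_sqrt_le_abs (p x), sq_sqrt_le_abs (q x),
      sq_nonneg (Real.sqrt (p x) - Real.sqrt (q x))]

/-- Closed form of the Hellinger distance-based kernel regression estimator.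
With `g = Σᵢ Kᵢ √fᵢ` and `Z = ∫_I g²`, one has `0 < Z < ∞`, `f̂₀ = g²/Z` is a probability
density function on `I`, and `f̂₀` minimizes `f ↦ Σᵢ Kᵢ ∫_I (√fᵢ − √f)²` over all
probability densities `f` on `I`. -/
theorem hellinger_kernel_estimator_closed_form
    (I : Set ℝ) (hI : I.OrdConnected) (N : ℕ)
    (f : Fin N → ℝ → ℝ) (hf : ∀ i, IsPDFOn I (f i))
    (K : Fin N → ℝ) (hK : ∀ i, 0 ≤ K i) (hKsum : 0 < ∑ i, K i) :
    (∫⁻ x in I, ENNReal.ofReal ((∑ i, K i * Real.sqrt (f i x)) ^ 2)) < ⊤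
    ∧ 0 < ∫ x in I, (∑ i, K i * Real.sqrt (f i x)) ^ 2
    ∧ IsPDFOn I (fun x =>
        (∑ i, K i * Real.sqrt (f i x)) ^ 2
          / ∫ y in I, (∑ i, K i * Real.sqrt (f i y)) ^ 2)
    ∧ ∀ f0 : ℝ → ℝ, IsPDFOn I f0 →
        ∑ i, K i * ∫ x in I,
            (Real.sqrt (f i x)
              - Real.sqrt ((∑ j, K j * Real.sqrt (f j x)) ^ 2
                  / ∫ y in I, (∑ j, K j * Real.sqrt (f j y)) ^ 2)) ^ 2
          ≤ ∑ i, K i * ∫ x in I, (Real.sqrt (f i x) - Real.sqrt (f0 x)) ^ 2 := by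
  classical
  set g : ℝ → ℝ := fun x => ∑ i, K i * Real.sqrt (f i x) with hgdef
  have hgx : ∀ x, (∑ i, K i * Real.sqrt (f i x)) = g x := fun _ => rfl
  simp only [hgx]
  have hg_meas : Measurable g := by
    exact Finset.measurable_sum _ fun i _ => ((hf i).1.sqrt.const_mul (K i))
  have hg_nonneg : ∀ x, 0 ≤ g x := fun x =>
    Finset.sum_nonneg fun i _ => mul_nonneg (hK i) (Real.sqrt_nonneg _)
  -- integrability of g^2
  have hg2_eq : ∀ x, g x ^ 2 = ∑ i, ∑ j, (K i * K j) *
      (Real.sqrt (f i x) * Real.sqrt (f j x)) := by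
    intro x
    rw [sq, hgdef, Finset.sum_mul_sum]
    exact Finset.sum_congr rfl fun i _ => Finset.sum_congr rfl fun j _ => by ring
  have hg2_int : IntegrableOn (fun x => g x ^ 2) I := by
    have : IntegrableOn (fun x => ∑ i, ∑ j : Fin N, (K i * K j) *
        (Real.sqrt (f i x) * Real.sqrt (f j x))) I := by
      apply integrable_finset_sum
      intro i _
      apply integrable_finset_sum
      intro j _
      exact (cross_integrable (hf i) (hf j)).const_mul _
    exact this.congr (Filter.Eventually.of_forall fun x => (hg2_eq x).symm)
  set Z : ℝ := ∫ x in I, g x ^ 2 with hZdef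
  -- positivity of Z
  obtain ⟨i₀, hi₀⟩ : ∃ i, 0 < K i := by
    by_contra hc
    push_neg at hc
    exact absurd (Finset.sum_nonpos fun i _ => hc i) (not_le.2 hKsum)
  have hZ_ge : K i₀ ^ 2 ≤ Z := by
    calc K i₀ ^ 2 = ∫ x in I, K i₀ ^ 2 * f i₀ x := by
          rw [integral_const_mul, (hf i₀).2.2, mul_one]
      _ ≤ Z := by
          apply integral_mono_ae ((hf i₀).integrableOn.const_mul _) hg2_int
          filter_upwards [(hf i₀).sqrt_sq_ae] with x hx
          have h1 : K i₀ * Real.sqrt (f i₀ x) ≤ g x := by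
            apply Finset.single_le_sum (f := fun i => K i * Real.sqrt (f i x))
              (fun i _ => mul_nonneg (hK i) (Real.sqrt_nonneg _)) (Finset.mem_univ i₀)
          have h2 : 0 ≤ K i₀ * Real.sqrt (f i₀ x) := by positivity
          calc K i₀ ^ 2 * f i₀ x = (K i₀ * Real.sqrt (f i₀ x)) ^ 2 := by
                rw [mul_pow, hx]
            _ ≤ g x ^ 2 := by nlinarith
  have hZ_pos : 0 < Z := lt_of_lt_of_le (by positivity) hZ_ge
  -- PDF property of the estimator
  have hpdf : IsPDFOn I (fun x => g x ^ 2 / Z) := by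
    refine ⟨(hg_meas.pow_const 2).div_const Z, ?_, ?_⟩
    · exact Filter.Eventually.of_forall fun x => by positivity
    · rw [integral_div, hZdef, div_self hZ_pos.ne']
  -- key identity: objective = 2 ΣK - 2 ∫ g √f0
  have key : ∀ f0 : ℝ → ℝ, IsPDFOn I f0 →
      (∑ i, K i * ∫ x in I, (Real.sqrt (f i x) - Real.sqrt (f0 x)) ^ 2)
        = 2 * (∑ i, K i) - 2 * ∫ x in I, g x * Real.sqrt (f0 x) := by
    intro f0 hf0
    have hterm : ∀ i : Fin N, (∫ x in I, (Real.sqrt (f i x) - Real.sqrt (f0 x)) ^ 2)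
        = 2 - 2 * ∫ x in I, Real.sqrt (f i x) * Real.sqrt (f0 x) := by
      intro i
      have hcongr : (fun x => (Real.sqrt (f i x) - Real.sqrt (f0 x)) ^ 2)
          =ᵐ[volume.restrict I]
          (fun x => (f i x + f0 x) - 2 * (Real.sqrt (f i x) * Real.sqrt (f0 x))) := by
        filter_upwards [(hf i).sqrt_sq_ae, hf0.sqrt_sq_ae] with x h1 h2
        nlinarith [h1, h2]
      have ha : IntegrableOn (fun x => f i x + f0 x) I := (hf i).integrableOn.add hf0.integrableOn
      have hb : IntegrableOn (fun x => 2 * (Real.sqrt (f i x) * Real.sqrt (f0 x))) I :=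
        (cross_integrable (hf i) hf0).const_mul 2
      rw [integral_congr_ae hcongr, integral_sub ha hb,
        integral_add (hf i).integrableOn hf0.integrableOn, (hf i).2.2, hf0.2.2,
        integral_const_mul]
      norm_num
    have hsum : (∑ i, K i * ∫ x in I, Real.sqrt (f i x) * Real.sqrt (f0 x))
        = ∫ x in I, g x * Real.sqrt (f0 x) := by
      have h1 : ∀ i : Fin N, IntegrableOn
          (fun x => K i * (Real.sqrt (f i x) * Real.sqrt (f0 x))) I :=
        fun i => (cross_integrable (hf i) hf0).const_mul (K i)
      have h2 := integral_finset_sum (μ := volume.restrict I) Finset.univ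
        (f := fun i x => K i * (Real.sqrt (f i x) * Real.sqrt (f0 x))) (fun i _ => h1 i)
      calc (∑ i, K i * ∫ x in I, Real.sqrt (f i x) * Real.sqrt (f0 x))
          = ∑ i, ∫ x in I, K i * (Real.sqrt (f i x) * Real.sqrt (f0 x)) := by
            exact Finset.sum_congr rfl fun i _ => (integral_const_mul _ _).symm
        _ = ∫ x in I, ∑ i, K i * (Real.sqrt (f i x) * Real.sqrt (f0 x)) := h2.symm
        _ = ∫ x in I, g x * Real.sqrt (f0 x) := by
            refine integral_congr_ae (Filter.Eventually.of_forall fun x => ?_)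
            simp only [hgdef, Finset.sum_mul]
            exact Finset.sum_congr rfl fun i _ => by ring
    simp only [hterm]
    rw [Finset.sum_congr rfl (fun i _ => by ring :
      ∀ i ∈ Finset.univ, K i * (2 - 2 * ∫ x in I, Real.sqrt (f i x) * Real.sqrt (f0 x))
        = 2 * K i - 2 * (K i * ∫ x in I, Real.sqrt (f i x) * Real.sqrt (f0 x))),
      Finset.sum_sub_distrib, ← Finset.mul_sum, ← Finset.mul_sum, hsum]
  -- Cauchy–Schwarz-type bound
  have hbound : ∀ f0 : ℝ → ℝ, IsPDFOn I f0 →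
      (∫ x in I, g x * Real.sqrt (f0 x)) ≤ Real.sqrt Z := by
    intro f0 hf0
    have hsZ : 0 < Real.sqrt Z := Real.sqrt_pos.2 hZ_pos
    have hint : IntegrableOn (fun x => g x * Real.sqrt (f0 x)) I := by
      have hb : IntegrableOn (fun x => (g x ^ 2 + |f0 x|) / 2) I :=
        ((hg2_int.add hf0.integrableOn.abs).div_const 2)
      refine Integrable.mono' hb ((hg_meas.mul hf0.1.sqrt).aestronglyMeasurable) ?_
      refine Filter.Eventually.of_forall fun x => ?_
      rw [Real.norm_eq_abs, abs_of_nonneg (mul_nonneg (hg_nonneg x) (Real.sqrt_nonneg _))]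
      nlinarith [sq_sqrt_le_abs (f0 x), sq_nonneg (g x - Real.sqrt (f0 x)),
        Real.sqrt_nonneg (f0 x), hg_nonneg x]
    have hZZ : Real.sqrt Z * Real.sqrt Z = Z := Real.mul_self_sqrt hZ_pos.le
    have hbint : IntegrableOn (fun x => (g x ^ 2 / Real.sqrt Z + Real.sqrt Z * f0 x) / 2) I :=
      ((hg2_int.div_const _).add (hf0.integrableOn.const_mul _)).div_const 2
    have hmaj : (∫ x in I, g x * Real.sqrt (f0 x))
        ≤ ∫ x in I, (g x ^ 2 / Real.sqrt Z + Real.sqrt Z * f0 x) / 2 := by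
      apply integral_mono_ae hint hbint
      filter_upwards [hf0.sqrt_sq_ae, hf0.2.1] with x hx hx0
      have h3 : g x ^ 2 / Real.sqrt Z = g x ^ 2 * Real.sqrt Z / Z := by
        rw [div_eq_div_iff hsZ.ne' hZ_pos.ne', mul_assoc, hZZ]
      rw [le_div_iff₀ (by norm_num : (0:ℝ) < 2), h3, div_add' _ _ _ hZ_pos.ne',
        le_div_iff₀ hZ_pos]
      have e1 : Real.sqrt Z * (g x - Real.sqrt Z * Real.sqrt (f0 x)) ^ 2
          = g x ^ 2 * Real.sqrt Z - 2 * Z * (g x * Real.sqrt (f0 x))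
            + Real.sqrt Z * (Z * f0 x) := by
        linear_combination (Real.sqrt Z * f0 x - 2 * g x * Real.sqrt (f0 x)) * hZZ
          + Real.sqrt Z ^ 3 * hx
      nlinarith [mul_nonneg hsZ.le (sq_nonneg (g x - Real.sqrt Z * Real.sqrt (f0 x))), e1]
    calc (∫ x in I, g x * Real.sqrt (f0 x))
        ≤ ∫ x in I, (g x ^ 2 / Real.sqrt Z + Real.sqrt Z * f0 x) / 2 := hmaj
      _ = ((∫ x in I, g x ^ 2) / Real.sqrt Z + Real.sqrt Z * ∫ x in I, f0 x) / 2 := by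
          rw [integral_div, integral_add (hg2_int.div_const _)
            (hf0.integrableOn.const_mul _), integral_div, integral_const_mul]
      _ = Real.sqrt Z := by
          rw [← hZdef, hf0.2.2, mul_one, Real.div_sqrt]; ring
  -- value at the estimator
  have hhat : (∫ x in I, g x * Real.sqrt (g x ^ 2 / Z)) = Real.sqrt Z := by
    have heq : ∀ x, g x * Real.sqrt (g x ^ 2 / Z) = (g x ^ 2) / Real.sqrt Z := by
      intro x
      rw [Real.sqrt_div (sq_nonneg _), Real.sqrt_sq (hg_nonneg x)]
      rw [sq]; ring
    simp only [heq]
    rw [integral_div, ← hZdef, Real.div_sqrt]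
  refine ⟨?_, hZ_pos, hpdf, ?_⟩
  · exact hg2_int.lintegral_lt_top
  · intro f0 hf0
    rw [key _ hpdf, key _ hf0, hhat]
    have := hbound f0 hf0
    linarith
end

section
/- Let I ⊆ ℝ be an interval with Lebesgue measure, let f₁, …, f_N : I → ℝ be probability density functions on I, and let K₁, …, K_N be nonnegative reals with Σᵢ Kᵢ > 0. Set g = Σᵢ Kᵢ √(fᵢ) and Z = ∫_I g². If a probability density function f on I satisfies Σᵢ Kᵢ ∫_I (√(fᵢ) − √(f))² = Σᵢ Kᵢ ∫_I (√(fᵢ) − √(g²/Z))², then f = g²/Z almost everywhere on I; i.e., the Hellinger distance-based kernel estimator is the unique minimizer up to almost-everywhere equality. -/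
open MeasureTheory
open scoped BigOperators

/-- Uniqueness of the Hellinger distance-based kernel estimator: with `g = Σᵢ Kᵢ √fᵢ` and
`Z = ∫_I g²`, if a probability density `f₀` on `I` achieves the same value of the weighted
squared Hellinger objective as `g²/Z`, then `f₀ = g²/Z` almost everywhere on `I`. -/
theorem hellinger_kernel_estimator_unique
    (I : Set ℝ) (hI : I.OrdConnected) (N : ℕ)
    (f : Fin N → ℝ → ℝ) (hf : ∀ i, IsPDFOn I (f i))
    (K : Fin N → ℝ) (hK : ∀ i, 0 ≤ K i) (hKsum : 0 < ∑ i, K i)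
    (f0 : ℝ → ℝ) (hf0 : IsPDFOn I f0)
    (hEq : ∑ i, K i * ∫ x in I, (Real.sqrt (f i x) - Real.sqrt (f0 x)) ^ 2
        = ∑ i, K i * ∫ x in I,
            (Real.sqrt (f i x)
              - Real.sqrt ((∑ j, K j * Real.sqrt (f j x)) ^ 2
                  / ∫ y in I, (∑ j, K j * Real.sqrt (f j y)) ^ 2)) ^ 2) :
    f0 =ᵐ[volume.restrict I] fun x =>
      (∑ j, K j * Real.sqrt (f j x)) ^ 2
        / ∫ y in I, (∑ j, K j * Real.sqrt (f j y)) ^ 2 := by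
  set μ := volume.restrict I with hμdef
  set g : ℝ → ℝ := fun x => ∑ j, K j * Real.sqrt (f j x) with hgdef
  have hgfold : ∀ x, (∑ j, K j * Real.sqrt (f j x)) = g x := fun _ => rfl
  simp only [hgfold] at hEq ⊢
  set Z : ℝ := ∫ y in I, g y ^ 2 with hZdef
  -- basic measurability
  have hfm : ∀ i, Measurable (f i) := fun i => (hf i).1
  have hf0m : Measurable f0 := hf0.1
  have hgm : Measurable g := by
    apply Finset.measurable_sum
    exact fun j _ => ((hfm j).sqrt.const_mul _)
  -- integrability of the densities
  have hint : ∀ i, Integrable (f i) μ := by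
    intro i
    by_contra h
    have := integral_undef h
    rw [(hf i).2.2] at this
    exact one_ne_zero this
  have hint0 : Integrable f0 μ := by
    by_contra h
    have := integral_undef h
    rw [hf0.2.2] at this
    exact one_ne_zero this
  -- g is nonnegative
  have hg0 : ∀ x, 0 ≤ g x := fun x =>
    Finset.sum_nonneg fun i _ => mul_nonneg (hK i) (Real.sqrt_nonneg _)
  -- elementary bounds
  have hsq_abs : ∀ y : ℝ, Real.sqrt y ^ 2 ≤ |y| := by
    intro y
    have h1 : Real.sqrt y ≤ Real.sqrt |y| := Real.sqrt_le_sqrt (le_abs_self y)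
    have h2 : Real.sqrt |y| ^ 2 = |y| := Real.sq_sqrt (abs_nonneg y)
    nlinarith [Real.sqrt_nonneg y, Real.sqrt_nonneg |y|]
  have hprod_bd : ∀ a b : ℝ, Real.sqrt a * Real.sqrt b ≤ |a| + |b| := by
    intro a b
    nlinarith [hsq_abs a, hsq_abs b, sq_nonneg (Real.sqrt a - Real.sqrt b),
      Real.sqrt_nonneg a, Real.sqrt_nonneg b, abs_nonneg a, abs_nonneg b]
  -- integrability of products of square roots
  have hIprod : ∀ (a b : ℝ → ℝ), Measurable a → Measurable b → Integrable a μ →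
      Integrable b μ → Integrable (fun x => Real.sqrt (a x) * Real.sqrt (b x)) μ := by
    intro a b ma mb ia ib
    refine (ia.abs.add ib.abs).mono' (ma.sqrt.mul mb.sqrt).aestronglyMeasurable ?_
    filter_upwards with x
    rw [Real.norm_eq_abs, abs_of_nonneg (mul_nonneg (Real.sqrt_nonneg _) (Real.sqrt_nonneg _))]
    exact hprod_bd _ _
  -- integrability of s_i * g
  have hsg : ∀ i, Integrable (fun x => Real.sqrt (f i x) * g x) μ := by
    intro i
    have heq : (fun x => Real.sqrt (f i x) * g x)
        = fun x => ∑ j, K j * (Real.sqrt (f i x) * Real.sqrt (f j x)) := by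
      funext x
      rw [hgdef]
      simp only [Finset.mul_sum]
      exact Finset.sum_congr rfl fun j _ => by ring
    rw [heq]
    exact integrable_finset_sum _ fun j _ =>
      ((hIprod _ _ (hfm i) (hfm j) (hint i) (hint j)).const_mul _)
  -- integrability of g ^ 2
  have hg2 : Integrable (fun x => g x ^ 2) μ := by
    have heq : (fun x => g x ^ 2) = fun x => ∑ j, K j * (Real.sqrt (f j x) * g x) := by
      funext x
      rw [sq, hgdef]
      simp only [Finset.sum_mul]
      exact Finset.sum_congr rfl fun j _ => by ring
    rw [heq]
    exact integrable_finset_sum _ fun j _ => ((hsg j).const_mul _)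
  have hZint : ∫ x, g x ^ 2 ∂μ = Z := rfl
  -- Z is positive
  have hZpos : 0 < Z := by
    obtain ⟨i0, -, hi0⟩ : ∃ i ∈ Finset.univ, (0 : ℝ) < K i := by
      apply Finset.exists_lt_of_sum_lt
      simpa using hKsum
    have hlow : ∀ᵐ x ∂μ, K i0 ^ 2 * f i0 x ≤ g x ^ 2 := by
      filter_upwards [(hf i0).2.1] with x hx
      have h1 : K i0 * Real.sqrt (f i0 x) ≤ g x :=
        Finset.single_le_sum (f := fun j => K j * Real.sqrt (f j x))
          (fun j _ => mul_nonneg (hK j) (Real.sqrt_nonneg _)) (Finset.mem_univ i0)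
      have h2 : (K i0 * Real.sqrt (f i0 x)) ^ 2 = K i0 ^ 2 * f i0 x := by
        rw [mul_pow, Real.sq_sqrt hx]
      nlinarith [mul_nonneg (hK i0) (Real.sqrt_nonneg (f i0 x)), hg0 x]
    have hm := integral_mono_ae ((hint i0).const_mul (K i0 ^ 2)) hg2 hlow
    rw [integral_const_mul, hZint] at hm
    have h1 : ∫ a, f i0 a ∂μ = 1 := (hf i0).2.2
    rw [h1] at hm
    nlinarith
  set c : ℝ := Real.sqrt Z with hcdef
  have hcpos : 0 < c := Real.sqrt_pos.2 hZpos
  have hc2 : c ^ 2 = Z := Real.sq_sqrt hZpos.le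
  -- rewrite the estimator's square root
  have hfold2 : ∀ x, Real.sqrt (g x ^ 2 / Z) = g x / c := by
    intro x
    rw [Real.sqrt_div (sq_nonneg _), Real.sqrt_sq (hg0 x)]
  simp only [hfold2] at hEq
  -- a.e. identities for squares of square roots
  have ht0sq : (fun x => Real.sqrt (f0 x) ^ 2) =ᵐ[μ] f0 := by
    filter_upwards [hf0.2.1] with x hx using Real.sq_sqrt hx
  have ht0sq_int : Integrable (fun x => Real.sqrt (f0 x) ^ 2) μ := hint0.congr ht0sq.symm
  have ht0sq_integral : ∫ x, Real.sqrt (f0 x) ^ 2 ∂μ = 1 := by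
    rw [integral_congr_ae ht0sq]
    exact hf0.2.2
  -- expansion of the Hellinger objective
  have expand : ∀ (i : Fin N) (b : ℝ → ℝ), Integrable (fun x => b x ^ 2) μ →
      Integrable (fun x => Real.sqrt (f i x) * b x) μ →
      (∫ x, (Real.sqrt (f i x) - b x) ^ 2 ∂μ)
        = 1 + (∫ x, b x ^ 2 ∂μ) - 2 * ∫ x, Real.sqrt (f i x) * b x ∂μ := by
    intro i b hb2 hsb
    have hsieq : (fun x => Real.sqrt (f i x) ^ 2) =ᵐ[μ] f i := by
      filter_upwards [(hf i).2.1] with x hx using Real.sq_sqrt hx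
    have hs2 : Integrable (fun x => Real.sqrt (f i x) ^ 2) μ := (hint i).congr hsieq.symm
    have h1 : ∀ x, (Real.sqrt (f i x) - b x) ^ 2
        = Real.sqrt (f i x) ^ 2 + b x ^ 2 - 2 * (Real.sqrt (f i x) * b x) := fun x => by ring
    simp only [h1]
    have e1 := integral_sub (hs2.add hb2) (hsb.const_mul 2)
    have e2 := integral_add hs2 hb2
    simp only [Pi.add_apply] at e1 e2
    rw [e1, e2, integral_const_mul]
    have h2 : ∫ x, Real.sqrt (f i x) ^ 2 ∂μ = 1 := by
      rw [integral_congr_ae hsieq]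
      exact (hf i).2.2
    rw [h2]
  -- the estimator side data
  have hb2' : Integrable (fun x => (g x / c) ^ 2) μ := by
    have : (fun x => (g x / c) ^ 2) = fun x => g x ^ 2 / c ^ 2 := by
      funext x; rw [div_pow]
    rw [this]
    exact hg2.div_const _
  have hb2'_integral : ∫ x, (g x / c) ^ 2 ∂μ = 1 := by
    have h : ∀ x, (g x / c) ^ 2 = g x ^ 2 / c ^ 2 := fun x => by rw [div_pow]
    simp only [h]
    rw [integral_div, hZint, hc2, div_self hZpos.ne']
  have hsg' : ∀ i, Integrable (fun x => Real.sqrt (f i x) * (g x / c)) μ := by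
    intro i
    have : (fun x => Real.sqrt (f i x) * (g x / c))
        = fun x => (Real.sqrt (f i x) * g x) / c := by
      funext x; rw [mul_div_assoc]
    rw [this]
    exact (hsg i).div_const _
  -- rewrite both sides of hEq
  have hL : ∀ i, ∫ x, (Real.sqrt (f i x) - Real.sqrt (f0 x)) ^ 2 ∂μ
      = 2 - 2 * ∫ x, Real.sqrt (f i x) * Real.sqrt (f0 x) ∂μ := by
    intro i
    rw [expand i _ ht0sq_int (hIprod _ _ (hfm i) hf0m (hint i) hint0), ht0sq_integral]
    ring
  have hR : ∀ i, ∫ x, (Real.sqrt (f i x) - g x / c) ^ 2 ∂μ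
      = 2 - (2 / c) * ∫ x, Real.sqrt (f i x) * g x ∂μ := by
    intro i
    rw [expand i _ hb2' (hsg' i), hb2'_integral]
    have h : ∫ x, Real.sqrt (f i x) * (g x / c) ∂μ
        = (∫ x, Real.sqrt (f i x) * g x ∂μ) / c := by
      rw [← integral_div]
      exact integral_congr_ae (Filter.Eventually.of_forall fun x => by simp [mul_div_assoc])
    rw [h]
    ring
  simp only [hL, hR] at hEq
  -- sum manipulation
  have hgen : ∀ (a : Fin N → ℝ) (t : ℝ),
      ∑ i, K i * (2 - t * a i) = 2 * (∑ i, K i) - t * ∑ i, K i * a i := by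
    intro a t
    rw [Finset.mul_sum, Finset.mul_sum, ← Finset.sum_sub_distrib]
    exact Finset.sum_congr rfl fun i _ => by ring
  rw [hgen, hgen] at hEq
  -- swap sums and integrals
  have hswap : ∀ (b : ℝ → ℝ), (∀ i, Integrable (fun x => Real.sqrt (f i x) * b x) μ) →
      ∑ i, K i * ∫ x, Real.sqrt (f i x) * b x ∂μ = ∫ x, g x * b x ∂μ := by
    intro b hb
    have h1 : ∀ i, K i * ∫ x, Real.sqrt (f i x) * b x ∂μ
        = ∫ x, K i * (Real.sqrt (f i x) * b x) ∂μ := fun i => (integral_const_mul _ _).symm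
    simp only [h1]
    rw [← integral_finset_sum _ fun i _ => ((hb i).const_mul (K i))]
    apply integral_congr_ae
    filter_upwards with x
    rw [hgdef]
    simp only [Finset.sum_mul]
    exact Finset.sum_congr rfl fun i _ => by ring
  rw [hswap _ fun i => hIprod _ _ (hfm i) hf0m (hint i) hint0,
      hswap _ fun i => hsg i] at hEq
  have hgg : ∫ x, g x * g x ∂μ = Z := by
    rw [← hZint]
    exact integral_congr_ae (Filter.Eventually.of_forall fun x => (sq (g x)).symm)
  rw [hgg] at hEq
  -- deduce that ∫ g √f0 = c
  have hkey : ∫ x, g x * Real.sqrt (f0 x) ∂μ = c := by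
    have h1 : (2 / c) * Z = 2 * c := by
      field_simp
      nlinarith [hc2]
    rw [h1] at hEq
    linarith
  -- the nonnegative defect integrand
  have hgt0 : Integrable (fun x => g x * Real.sqrt (f0 x)) μ := by
    have heq : (fun x => g x * Real.sqrt (f0 x))
        = fun x => ∑ j, K j * (Real.sqrt (f j x) * Real.sqrt (f0 x)) := by
      funext x
      rw [hgdef]
      simp only [Finset.sum_mul]
      exact Finset.sum_congr rfl fun j _ => by ring
    rw [heq]
    exact integrable_finset_sum _ fun j _ =>
      ((hIprod _ _ (hfm j) hf0m (hint j) hint0).const_mul _)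
  have hφeq : ∀ x, (Real.sqrt (f0 x) - g x / c) ^ 2
      = Real.sqrt (f0 x) ^ 2 + (g x / c) ^ 2 - (2 / c) * (g x * Real.sqrt (f0 x)) := by
    intro x; field_simp; ring
  have hφint : Integrable (fun x => (Real.sqrt (f0 x) - g x / c) ^ 2) μ := by
    have : (fun x => (Real.sqrt (f0 x) - g x / c) ^ 2)
        = fun x => Real.sqrt (f0 x) ^ 2 + (g x / c) ^ 2
            - (2 / c) * (g x * Real.sqrt (f0 x)) := by
      funext x; exact hφeq x
    rw [this]
    exact (ht0sq_int.add hb2').sub (hgt0.const_mul _)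
  have hφzero : ∫ x, (Real.sqrt (f0 x) - g x / c) ^ 2 ∂μ = 0 := by
    simp only [hφeq]
    have e1 := integral_sub (ht0sq_int.add hb2') (hgt0.const_mul (2 / c))
    have e2 := integral_add ht0sq_int hb2'
    simp only [Pi.add_apply] at e1 e2
    rw [e1, e2, integral_const_mul, ht0sq_integral, hb2'_integral, hkey]
    rw [div_mul_cancel₀ 2 hcpos.ne']
    norm_num
  have hφae : (fun x => (Real.sqrt (f0 x) - g x / c) ^ 2) =ᵐ[μ] 0 :=
    (integral_eq_zero_iff_of_nonneg_ae
      (Filter.Eventually.of_forall fun x => sq_nonneg _) hφint).1 hφzero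
  -- conclude
  filter_upwards [hφae, hf0.2.1] with x hx hx0
  have h1 : Real.sqrt (f0 x) = g x / c := by
    have := hx
    simp only [Pi.zero_apply] at this
    have h2 : Real.sqrt (f0 x) - g x / c = 0 := by
      exact pow_eq_zero_iff (n := 2) (by norm_num) |>.1 this
    linarith
  have h3 : f0 x = Real.sqrt (f0 x) ^ 2 := (Real.sq_sqrt hx0).symm
  rw [h3, h1, div_pow, hc2]
end
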